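/- arXiv:2005.12817 — 3 statements merged into one kernel-verified Lean document; each statement's English description precedes it below -/
import Mathlib

section
/- Let G be a stable weighted multigraph and let d be a multidegree on G such that Σ_{v∈S} d_v ≥ g(S) for every nonempty subset S ⊆ V. Let A, B ⊆ V be nonempty subsets such that the induced subgraphs on A, on B, and on A ∪ B are connected, and Σ_{v∈A} d_v = g(A) and Σ_{v∈B} d_v = g(B). Then Σ_{v∈A∪B} d_v = g(A ∪ B). -/
open Finset

/-- A multigraph on vertex type `V` with edge type `E`: each edge `e` joins the
(possibly equal) vertices `fst e` and `snd e` (loops and multiple edges allowed). -/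
structure Multigraph (V E : Type) where
  fst : E → V
  snd : E → V

/-- An orientation of a multigraph: each edge gets a tail and a head, which are its
two endpoints (in one of the two possible orders). -/
structure GraphOrientation {V E : Type} (G : Multigraph V E) where
  tail : E → V
  head : E → V
  compat : ∀ e, (tail e = G.fst e ∧ head e = G.snd e) ∨ (tail e = G.snd e ∧ head e = G.fst e)

variable {V E : Type} [Fintype V] [Fintype E] [DecidableEq V] [DecidableEq E]

namespace Multigraph

/-- `E(S)`: the set of edges with both endpoints in `S`. -/
def edgesIn (G : Multigraph V E) (S : Finset V) : Finset E :=
  univ.filter fun e => G.fst e ∈ S ∧ G.snd e ∈ S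

/-- Membership in the cut of `S`: exactly one endpoint of `e` lies in `S`. -/
def InCut (G : Multigraph V E) (S : Finset V) (e : E) : Prop :=
  (G.fst e ∈ S ∧ G.snd e ∉ S) ∨ (G.fst e ∉ S ∧ G.snd e ∈ S)

instance (G : Multigraph V E) (S : Finset V) : DecidablePred (G.InCut S) := fun e =>
  decidable_of_iff ((G.fst e ∈ S ∧ G.snd e ∉ S) ∨ (G.fst e ∉ S ∧ G.snd e ∈ S)) Iff.rfl

/-- `ε(S)`: the number of edges with exactly one endpoint in `S`. -/
def cutCard (G : Multigraph V E) (S : Finset V) : ℕ :=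
  (univ.filter fun e => G.InCut S e).card

/-- The genus `g(S) = |E(S)| - |S| + 1 + Σ_{v ∈ S} g_v` of a subset of vertices,
for the vertex weight function `w`. -/
def genusOf (G : Multigraph V E) (w : V → ℕ) (S : Finset V) : ℤ :=
  ((G.edgesIn S).card : ℤ) - S.card + 1 + ∑ v ∈ S, (w v : ℤ)

/-- The genus of the weighted multigraph. -/
def genus (G : Multigraph V E) (w : V → ℕ) : ℤ := G.genusOf w univ

/-- The valence of a vertex: the number of edge-ends at it (a loop counts twice). -/
def valence (G : Multigraph V E) (v : V) : ℕ :=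
  (univ.filter fun e => G.fst e = v).card + (univ.filter fun e => G.snd e = v).card

/-- Adjacency via some edge. -/
def Adj (G : Multigraph V E) (a b : V) : Prop :=
  ∃ e, (G.fst e = a ∧ G.snd e = b) ∨ (G.fst e = b ∧ G.snd e = a)

/-- The multigraph is connected: nonempty, and any two vertices are joined by a path. -/
def Connected (G : Multigraph V E) : Prop :=
  Nonempty V ∧ ∀ a b : V, Relation.ReflTransGen G.Adj a b

/-- Adjacency inside the induced subgraph on `S` (via an edge of `E(S)`). -/
def AdjOn (G : Multigraph V E) (S : Finset V) (a b : V) : Prop :=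
  ∃ e, ((G.fst e = a ∧ G.snd e = b) ∨ (G.fst e = b ∧ G.snd e = a)) ∧
    G.fst e ∈ S ∧ G.snd e ∈ S

/-- The induced subgraph on `S` is connected. -/
def ConnectedOn (G : Multigraph V E) (S : Finset V) : Prop :=
  ∀ a ∈ S, ∀ b ∈ S, Relation.ReflTransGen (G.AdjOn S) a b

/-- The weighted multigraph is stable: connected, of genus at least 2, and every
vertex of weight 0 has valence at least 3. -/
def IsStable (G : Multigraph V E) (w : V → ℕ) : Prop :=
  G.Connected ∧ 2 ≤ G.genus w ∧ ∀ v, w v = 0 → 3 ≤ G.valence v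

/-- A multidegree `d : V → ℤ` of total degree `δ = ∑ v, d v` is semistable if for every
nonempty `S ⊆ V`:
`(2g-2)(g(S)-1) + (δ-g+1)(2g(S)-2+ε(S)) ≤ (2g-2) Σ_{v ∈ S} d v`. -/
def Semistable (G : Multigraph V E) (w : V → ℕ) (d : V → ℤ) : Prop :=
  ∀ S : Finset V, S.Nonempty →
    (2 * G.genus w - 2) * (G.genusOf w S - 1) +
      ((∑ v, d v) - G.genus w + 1) * (2 * G.genusOf w S - 2 + (G.cutCard S : ℤ)) ≤
    (2 * G.genus w - 2) * ∑ v ∈ S, d v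

/-- A multidegree is stable if it is semistable and the semistability inequality is
strict for every nonempty proper subset of vertices. -/
def StableDeg (G : Multigraph V E) (w : V → ℕ) (d : V → ℤ) : Prop :=
  G.Semistable w d ∧ ∀ S : Finset V, S.Nonempty → S ≠ univ →
    (2 * G.genus w - 2) * (G.genusOf w S - 1) +
      ((∑ v, d v) - G.genus w + 1) * (2 * G.genusOf w S - 2 + (G.cutCard S : ℤ)) <
    (2 * G.genus w - 2) * ∑ v ∈ S, d v

/-- A multidegree is effective if it is nonnegative at every vertex. -/
def Effective (d : V → ℤ) : Prop := ∀ v, 0 ≤ d v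

end Multigraph

namespace GraphOrientation

variable {G : Multigraph V E}

/-- The indegree of a vertex: the number of edges with head `v`. -/
def indeg (O : GraphOrientation G) (v : V) : ℕ :=
  (univ.filter fun e => O.head e = v).card

/-- The multidegree `d_O` associated to an orientation: `d_O(v) = g_v - 1 + indeg_O(v)`. -/
def multidegree (O : GraphOrientation G) (w : V → ℕ) : V → ℤ :=
  fun v => (w v : ℤ) - 1 + (O.indeg v : ℤ)

/-- The edge `e₀` lies on a directed cycle of `O`: there are `k ≥ 1` distinct vertices
`vs` and distinct edges `es`, with `es i` directed from `vs i` to `vs (i+1)`,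
one of the edges being `e₀`. -/
def EdgeInCycle (O : GraphOrientation G) (e₀ : E) : Prop :=
  ∃ (k : ℕ) (vs : Fin (k + 1) → V) (es : Fin (k + 1) → E),
    Function.Injective vs ∧ Function.Injective es ∧ (∃ i, es i = e₀) ∧
    ∀ i, O.tail (es i) = vs i ∧ O.head (es i) = vs (i + 1)

/-- The orientation contains a directed cycle. -/
def HasDirectedCycle (O : GraphOrientation G) : Prop :=
  ∃ (k : ℕ) (vs : Fin (k + 1) → V) (es : Fin (k + 1) → E),
    Function.Injective vs ∧ Function.Injective es ∧
    ∀ i, O.tail (es i) = vs i ∧ O.head (es i) = vs (i + 1)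

/-- The orientation is acyclic: it contains no directed cycle. -/
def Acyclic (O : GraphOrientation G) : Prop := ¬ O.HasDirectedCycle

/-- The orientation is totally cyclic: every edge lies on a directed cycle. -/
def TotallyCyclic (O : GraphOrientation G) : Prop := ∀ e, O.EdgeInCycle e

/-- The cut of `S` is directed towards `S`: every edge of the cut has its head in `S`. -/
def CutTowards (O : GraphOrientation G) (S : Finset V) : Prop :=
  ∀ e, G.InCut S e → O.head e ∈ S

/-- The cut of `S` is directed away from `S`: every edge of the cut has its tail in `S`. -/
def CutAway (O : GraphOrientation G) (S : Finset V) : Prop :=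
  ∀ e, G.InCut S e → O.tail e ∈ S

end GraphOrientation

/-- If `Σ_{v ∈ S} d_v ≥ g(S)` for all nonempty `S` on a stable weighted
multigraph, and `A`, `B` are nonempty with connected induced subgraphs on `A`, `B` and
`A ∪ B`, and equality holds on `A` and on `B`, then equality holds on `A ∪ B`. -/
theorem equality_on_union
    (G : Multigraph V E) (w : V → ℕ) (hG : G.IsStable w) (d : V → ℤ)
    (h : ∀ S : Finset V, S.Nonempty → G.genusOf w S ≤ ∑ v ∈ S, d v)
    (A B : Finset V) (hA : A.Nonempty) (hB : B.Nonempty)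
    (hcA : G.ConnectedOn A) (hcB : G.ConnectedOn B) (hcAB : G.ConnectedOn (A ∪ B))
    (hdA : ∑ v ∈ A, d v = G.genusOf w A) (hdB : ∑ v ∈ B, d v = G.genusOf w B) :
    ∑ v ∈ A ∪ B, d v = G.genusOf w (A ∪ B) := by
  classical
  obtain ⟨a, ha⟩ := hA
  obtain ⟨b, hb⟩ := hB
  have hABne : (A ∪ B).Nonempty := ⟨a, mem_union_left _ ha⟩
  have hub := h (A ∪ B) hABne
  refine le_antisymm ?_ hub
  have hsum : ∑ v ∈ A ∪ B, d v + ∑ v ∈ A ∩ B, d v = ∑ v ∈ A, d v + ∑ v ∈ B, d v :=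
    Finset.sum_union_inter
  have hcardV : (A ∪ B).card + (A ∩ B).card = A.card + B.card :=
    Finset.card_union_add_card_inter A B
  have hsumw : ∑ v ∈ A ∪ B, (w v : ℤ) + ∑ v ∈ A ∩ B, (w v : ℤ)
      = ∑ v ∈ A, (w v : ℤ) + ∑ v ∈ B, (w v : ℤ) := Finset.sum_union_inter
  have hsubU : G.edgesIn A ∪ G.edgesIn B ⊆ G.edgesIn (A ∪ B) := by
    intro e he
    simp only [Multigraph.edgesIn, mem_union, mem_filter, mem_univ, true_and] at he ⊢
    tauto
  have hinterE : G.edgesIn A ∩ G.edgesIn B = G.edgesIn (A ∩ B) := by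
    ext e
    simp only [Multigraph.edgesIn, mem_inter, mem_filter, mem_univ, true_and]
    tauto
  by_cases hI : (A ∩ B).Nonempty
  · have hint := h (A ∩ B) hI
    have hE : (G.edgesIn A).card + (G.edgesIn B).card
        ≤ (G.edgesIn (A ∪ B)).card + (G.edgesIn (A ∩ B)).card := by
      have h1 := Finset.card_union_add_card_inter (G.edgesIn A) (G.edgesIn B)
      rw [hinterE] at h1
      have h2 := Finset.card_le_card hsubU
      omega
    simp only [Multigraph.genusOf] at hdA hdB hint ⊢
    have hcV : ((A ∪ B).card : ℤ) + ((A ∩ B).card : ℤ) = (A.card : ℤ) + (B.card : ℤ) := by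
      exact_mod_cast hcardV
    have hE' : ((G.edgesIn A).card : ℤ) + ((G.edgesIn B).card : ℤ)
        ≤ ((G.edgesIn (A ∪ B)).card : ℤ) + ((G.edgesIn (A ∩ B)).card : ℤ) := by
      exact_mod_cast hE
    linarith
  · -- disjoint case
    have hdisj : A ∩ B = ∅ := not_nonempty_iff_eq_empty.mp hI
    have hnm : ∀ x, x ∈ A → x ∈ B → False := by
      intro x hx hy
      have : x ∈ A ∩ B := mem_inter.mpr ⟨hx, hy⟩
      simp [hdisj] at this
    -- find a crossing edge
    have hpath := hcAB a (mem_union_left _ ha) b (mem_union_right _ hb)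
    have hcross : ∃ e, e ∈ G.edgesIn (A ∪ B) ∧ e ∉ G.edgesIn A ∧ e ∉ G.edgesIn B := by
      clear hub hsum hdA hdB
      induction hpath with
      | refl => exact absurd hb (fun hb' => hnm a ha hb')
      | @tail c b' h1 h2 ih =>
        obtain ⟨e, he, hf, hs⟩ := h2
        have hcU : c ∈ A ∪ B := by
          rcases he with ⟨h3, _⟩ | ⟨_, h4⟩
          · exact h3 ▸ (mem_union.mpr (by
              rcases mem_union.mp hf with h | h
              · exact Or.inl h
              · exact Or.inr h))
          · exact h4 ▸ (mem_union.mpr (by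
              rcases mem_union.mp hs with h | h
              · exact Or.inl h
              · exact Or.inr h))
        rcases mem_union.mp hcU with hcA' | hcB'
        · -- c ∈ A, b' ∈ B : e crosses
          refine ⟨e, ?_, ?_, ?_⟩
          · simp only [Multigraph.edgesIn, mem_filter, mem_univ, true_and]
            exact ⟨hf, hs⟩
          · simp only [Multigraph.edgesIn, mem_filter, mem_univ, true_and]
            rintro ⟨h5, h6⟩
            rcases he with ⟨h7, h8⟩ | ⟨h7, h8⟩
            · exact hnm (G.snd e) h6 (h8 ▸ hb)
            · exact hnm (G.fst e) h5 (h7 ▸ hb)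
          · simp only [Multigraph.edgesIn, mem_filter, mem_univ, true_and]
            rintro ⟨h5, h6⟩
            rcases he with ⟨h7, h8⟩ | ⟨h7, h8⟩
            · exact hnm c hcA' (h7 ▸ h5)
            · exact hnm c hcA' (h8 ▸ h6)
        · exact ih hcB'
    obtain ⟨e₀, he₀U, he₀A, he₀B⟩ := hcross
    have hdisjE : Disjoint (G.edgesIn A) (G.edgesIn B) := by
      rw [Finset.disjoint_left]
      intro e heA heB
      have : e ∈ G.edgesIn A ∩ G.edgesIn B := mem_inter.mpr ⟨heA, heB⟩
      rw [hinterE] at this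
      simp only [Multigraph.edgesIn, mem_filter, mem_univ, true_and, hdisj,
        Finset.notMem_empty] at this
      exact this.1
    have hE : (G.edgesIn A).card + (G.edgesIn B).card + 1 ≤ (G.edgesIn (A ∪ B)).card := by
      have hsub2 : insert e₀ (G.edgesIn A ∪ G.edgesIn B) ⊆ G.edgesIn (A ∪ B) := by
        intro e he
        rcases mem_insert.mp he with rfl | he
        · exact he₀U
        · exact hsubU he
      have hcard2 := Finset.card_le_card hsub2
      rw [Finset.card_insert_of_notMem (by
        simp only [mem_union]; tauto), Finset.card_union_of_disjoint hdisjE] at hcard2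
      omega
    have hsum0 : ∑ v ∈ A ∩ B, d v = 0 := by rw [hdisj]; simp
    have hsumw0 : ∑ v ∈ A ∩ B, (w v : ℤ) = 0 := by rw [hdisj]; simp
    have hcard0 : (A ∩ B).card = 0 := by rw [hdisj]; simp
    simp only [Multigraph.genusOf] at hdA hdB ⊢
    have hcV : ((A ∪ B).card : ℤ) = (A.card : ℤ) + (B.card : ℤ) := by
      have : (A ∪ B).card = A.card + B.card := by omega
      exact_mod_cast this
    have hE' : ((G.edgesIn A).card : ℤ) + ((G.edgesIn B).card : ℤ) + 1
        ≤ ((G.edgesIn (A ∪ B)).card : ℤ) := by exact_mod_cast hE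
    linarith
end

section
/- Let G be a stable weighted multigraph of genus g and let d be a semistable multidegree on G of total degree δ ≥ g. Then there exist effective multidegrees e and e′ on G such that d − e is a semistable multidegree of total degree g and d − e′ is a semistable multidegree of total degree g − 1. -/
open Finset

variable {V E : Type} [Fintype V] [Fintype E] [DecidableEq V] [DecidableEq E]

/-!
On a stable graph the coefficient `2 g(S) - 2 + ε(S) = Σ_{v ∈ S} k_v`, where
`k_v = 2 g_v - 2 + val(v)` is the canonical multidegree, lies between `1` and `2g - 3` for every
nonempty proper `S ⊊ V`. Hence semistability in degree `δ ≥ g` forces `d(S) ≥ g(S)` on proper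
subsets, and in degree `g` this condition is also sufficient.

The excess `S ↦ d(S) - g(S)` is submodular, so while `d(V) > g` some vertex lies in no set with
`d(S) = g(S)`, and one chip can be removed there without breaking `d(S) ≥ g(S)`. Repeating this
reaches degree `g`. Removing one more chip anywhere leaves `d(S) ≥ g(S) - 1` for all `S`, which is
semistability in degree `g - 1`.
-/

lemma Finset.sum_sub_pi_single {ι M : Type*} [DecidableEq ι] [AddCommGroup M] (s : Finset ι)
    (f : ι → M) (i : ι) (a : M) :
    ∑ j ∈ s, (f - Pi.single i a : ι → M) j = ∑ j ∈ s, f j - if i ∈ s then a else 0 := by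
  simp only [Pi.sub_apply, sum_sub_distrib, sum_pi_single']

namespace Multigraph

variable (G : Multigraph V E) (w : V → ℕ)

section Genus

omit [Fintype V]

lemma edgesIn_inter (S T : Finset V) : G.edgesIn (S ∩ T) = G.edgesIn S ∩ G.edgesIn T := by
  ext e
  simp only [edgesIn, mem_filter, mem_univ, true_and, mem_inter]
  tauto

lemma edgesIn_union_subset (S T : Finset V) : G.edgesIn S ∪ G.edgesIn T ⊆ G.edgesIn (S ∪ T) := by
  intro e
  simp only [edgesIn, mem_union, mem_filter, mem_univ, true_and]
  tauto

lemma genusOf_add_genusOf_le (S T : Finset V) :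
    G.genusOf w S + G.genusOf w T ≤ G.genusOf w (S ∪ T) + G.genusOf w (S ∩ T) := by
  have hE : #(G.edgesIn S) + #(G.edgesIn T) ≤ #(G.edgesIn (S ∪ T)) + #(G.edgesIn (S ∩ T)) := by
    rw [← card_union_add_card_inter, edgesIn_inter]
    gcongr
    exact G.edgesIn_union_subset S T
  have hV := card_union_add_card_inter S T
  have hw : ∑ v ∈ S ∪ T, (w v : ℤ) + ∑ v ∈ S ∩ T, (w v : ℤ) =
      ∑ v ∈ S, (w v : ℤ) + ∑ v ∈ T, (w v : ℤ) := sum_union_inter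
  unfold genusOf
  omega

/-- Supermodularity with `g(∅) = 1` only gives `g(S) + g(T) ≤ g(S ∪ T) + 1`; the edge `e` between
`S` and `T` removes the `+ 1`. -/
lemma genusOf_add_genusOf_le_of_disjoint {S T : Finset V} (hST : Disjoint S T) {e : E}
    (heS : G.InCut S e) (heST : e ∈ G.edgesIn (S ∪ T)) :
    G.genusOf w S + G.genusOf w T ≤ G.genusOf w (S ∪ T) := by
  have hEdisj : Disjoint (G.edgesIn S) (G.edgesIn T) := by
    rw [disjoint_iff_inter_eq_empty, ← edgesIn_inter, disjoint_iff_inter_eq_empty.1 hST]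
    simp [edgesIn]
  have he : e ∉ G.edgesIn S ∪ G.edgesIn T := by
    simp only [edgesIn, mem_union, mem_filter, mem_univ, true_and]
    rcases heS with ⟨h1, h2⟩ | ⟨h1, h2⟩
    · simp [h2, disjoint_left.1 hST h1]
    · simp [h1, disjoint_left.1 hST h2]
  have hE : #(G.edgesIn S) + #(G.edgesIn T) + 1 ≤ #(G.edgesIn (S ∪ T)) := by
    rw [← card_union_of_disjoint hEdisj, ← card_insert_of_notMem he]
    exact card_le_card (insert_subset heST (G.edgesIn_union_subset S T))
  have hV := card_union_of_disjoint hST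
  have hw : ∑ v ∈ S ∪ T, (w v : ℤ) = ∑ v ∈ S, (w v : ℤ) + ∑ v ∈ T, (w v : ℤ) := sum_union hST
  unfold genusOf
  omega

end Genus

section Canonical

omit [DecidableEq E]

omit [Fintype V] in
lemma sum_valence (S : Finset V) :
    ∑ v ∈ S, G.valence v = 2 * #(G.edgesIn S) + G.cutCard S := by
  have hends : #{e | G.fst e ∈ S} + #{e | G.snd e ∈ S} = 2 * #(G.edgesIn S) + G.cutCard S := by
    simp only [edgesIn, cutCard, card_filter, ← sum_add_distrib, mul_sum]
    refine sum_congr rfl fun e _ => ?_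
    by_cases h1 : G.fst e ∈ S <;> by_cases h2 : G.snd e ∈ S <;> simp [InCut, h1, h2]
  rw [← hends, ← sum_card_fiberwise_eq_card_filter, ← sum_card_fiberwise_eq_card_filter,
    ← sum_add_distrib]
  rfl

def canonicalDeg (v : V) : ℤ := G.valence v + 2 * (w v : ℤ) - 2

omit [Fintype V] in
lemma sum_canonicalDeg (S : Finset V) :
    ∑ v ∈ S, G.canonicalDeg w v = 2 * G.genusOf w S - 2 + G.cutCard S := by
  have h : ∑ v ∈ S, (G.valence v : ℤ) = 2 * #(G.edgesIn S) + G.cutCard S := by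
    exact_mod_cast G.sum_valence S
  simp only [canonicalDeg, sum_sub_distrib, sum_add_distrib, ← mul_sum, sum_const, h, genusOf,
    nsmul_eq_mul]
  ring

lemma cutCard_univ : G.cutCard univ = 0 := by
  simp [cutCard, InCut]

lemma sum_canonicalDeg_univ : ∑ v, G.canonicalDeg w v = 2 * G.genus w - 2 := by
  rw [sum_canonicalDeg, cutCard_univ, Nat.cast_zero, add_zero]
  rfl

variable {G w}

omit [Fintype E] in
lemma Connected.exists_inCut (hG : G.Connected) {S : Finset V} (hS : S.Nonempty)
    (hS' : S ≠ univ) : ∃ e, G.InCut S e := by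
  obtain ⟨a, ha⟩ := hS
  obtain ⟨b, hb⟩ := not_forall.1 (mt eq_univ_iff_forall.2 hS')
  induction hG.2 a b with
  | refl => exact absurd ha hb
  | @tail m c _ hmc ih =>
    by_cases hm : m ∈ S
    · obtain ⟨e, ⟨h1, h2⟩ | ⟨h1, h2⟩⟩ := hmc
      · exact ⟨e, Or.inl ⟨h1 ▸ hm, h2 ▸ hb⟩⟩
      · exact ⟨e, Or.inr ⟨h1 ▸ hb, h2 ▸ hm⟩⟩
    · exact ih hm

lemma Connected.one_le_valence [Nontrivial V] (hG : G.Connected) (v : V) : 1 ≤ G.valence v := by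
  obtain ⟨e, he⟩ := hG.exists_inCut (singleton_nonempty v) (singleton_ne_univ v)
  have hcut : 0 < G.cutCard {v} := card_pos.2 ⟨e, mem_filter.2 ⟨mem_univ e, he⟩⟩
  have := G.sum_valence {v}
  rw [sum_singleton] at this
  omega

lemma IsStable.one_le_canonicalDeg [Nontrivial V] (hG : G.IsStable w) (v : V) :
    1 ≤ G.canonicalDeg w v := by
  have hval := hG.1.one_le_valence v
  unfold canonicalDeg
  rcases Nat.eq_zero_or_pos (w v) with h | h
  · have := hG.2.2 v h
    rw [h]
    omega
  · omega

lemma IsStable.one_le_sum_canonicalDeg (hG : G.IsStable w) {S : Finset V} (hS : S.Nonempty)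
    (hS' : S ≠ univ) : 1 ≤ ∑ v ∈ S, G.canonicalDeg w v := by
  obtain ⟨a, ha⟩ := hS
  obtain ⟨b, hb⟩ := not_forall.1 (mt eq_univ_iff_forall.2 hS')
  have : Nontrivial V := ⟨a, b, ne_of_mem_of_not_mem ha hb⟩
  calc 1 ≤ G.canonicalDeg w a := hG.one_le_canonicalDeg a
    _ ≤ ∑ v ∈ S, G.canonicalDeg w v :=
      single_le_sum (fun v _ => zero_le_one.trans (hG.one_le_canonicalDeg v)) ha

lemma IsStable.sum_canonicalDeg_lt (hG : G.IsStable w) {S : Finset V} (hS : S.Nonempty)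
    (hS' : S ≠ univ) : ∑ v ∈ S, G.canonicalDeg w v < 2 * G.genus w - 2 := by
  have hSc := hG.one_le_sum_canonicalDeg ((compl_ne_univ_iff_nonempty _).1 (by rwa [compl_compl]))
    ((compl_ne_univ_iff_nonempty S).2 hS)
  have := sum_add_sum_compl S (G.canonicalDeg w)
  rw [sum_canonicalDeg_univ] at this
  omega

end Canonical

section Semistable

omit [DecidableEq E]

def GenusBounded (d : V → ℤ) : Prop :=
  ∀ S : Finset V, S.Nonempty → S ≠ univ → G.genusOf w S ≤ ∑ v ∈ S, d v

variable {G w} {d : V → ℤ}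

lemma Semistable.genusBounded (hG : G.IsStable w) (hss : G.Semistable w d)
    (hδ : G.genus w ≤ ∑ v, d v) : G.GenusBounded w d := by
  intro S hS hS'
  have hk := hG.one_le_sum_canonicalDeg hS hS'
  rw [sum_canonicalDeg] at hk
  have hpos : 0 < 2 * G.genus w - 2 := by linarith [hG.2.1]
  have hcoef : 1 ≤ ((∑ v, d v) - G.genus w + 1) * (2 * G.genusOf w S - 2 + G.cutCard S) :=
    one_le_mul_of_one_le_of_one_le (by linarith) hk
  have : (2 * G.genus w - 2) * (G.genusOf w S - 1) < (2 * G.genus w - 2) * ∑ v ∈ S, d v := by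
    linarith [hss S hS]
  linarith [lt_of_mul_lt_mul_left this hpos.le]

lemma GenusBounded.semistable (hG : G.IsStable w) (hd : G.GenusBounded w d)
    (hsum : ∑ v, d v = G.genus w) : G.Semistable w d := by
  intro S hS
  rw [hsum, sub_self, zero_add, one_mul, ← sum_canonicalDeg]
  by_cases hS' : S = univ
  · subst hS'
    rw [sum_canonicalDeg_univ, hsum]
    change (2 * G.genus w - 2) * (G.genus w - 1) + _ ≤ _
    linarith
  · have hk := hG.sum_canonicalDeg_lt hS hS'
    have hg : (0 : ℤ) ≤ 2 * G.genus w - 2 := by linarith [hG.2.1]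
    linarith [mul_le_mul_of_nonneg_left (hd S hS hS') hg]

lemma semistable_of_sum_eq_genus_sub_one (hg : 1 ≤ G.genus w)
    (hd : ∀ S : Finset V, S.Nonempty → G.genusOf w S - 1 ≤ ∑ v ∈ S, d v)
    (hsum : ∑ v, d v = G.genus w - 1) : G.Semistable w d := by
  intro S hS
  rw [hsum, show G.genus w - 1 - G.genus w + 1 = 0 by ring, zero_mul, add_zero]
  exact mul_le_mul_of_nonneg_left (hd S hS) (by linarith)

lemma GenusBounded.sub_single_genusOf_sub_one_le (hd : G.GenusBounded w d)
    (hsum : ∑ v, d v = G.genus w) (x : V) (S : Finset V) (hS : S.Nonempty) :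
    G.genusOf w S - 1 ≤ ∑ v ∈ S, (d - Pi.single x 1 : V → ℤ) v := by
  rw [sum_sub_pi_single]
  by_cases hS' : S = univ
  · subst hS'
    rw [hsum, if_pos (mem_univ x)]
    rfl
  · have := hd S hS hS'
    split_ifs <;> linarith

end Semistable

section Reduction

variable {G w} {d : V → ℤ}

/-- Call `S` *tight* if `d(S) ≤ g(S)` (so `d(S) = g(S)` when `S` is proper). -/
lemma GenusBounded.sum_union_le (hd : G.GenusBounded w d) {M T : Finset V} (hM' : M ≠ univ)
    (hM : ∑ v ∈ M, d v ≤ G.genusOf w M) (hT : ∑ v ∈ T, d v ≤ G.genusOf w T)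
    (hMT : (M ∩ T).Nonempty ∨ ∃ e, G.InCut M e ∧ e ∈ G.edgesIn (M ∪ T)) :
    ∑ v ∈ M ∪ T, d v ≤ G.genusOf w (M ∪ T) := by
  by_cases hI : (M ∩ T).Nonempty
  · have hI' : M ∩ T ≠ univ := fun h => hM' (univ_subset_iff.1 (h ▸ inter_subset_left))
    have hsum : ∑ v ∈ M ∪ T, d v + ∑ v ∈ M ∩ T, d v = ∑ v ∈ M, d v + ∑ v ∈ T, d v :=
      sum_union_inter
    linarith [hd _ hI hI', G.genusOf_add_genusOf_le w M T]
  · have hdisj : Disjoint M T := disjoint_iff_inter_eq_empty.2 (not_nonempty_iff_eq_empty.1 hI)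
    obtain ⟨e, heM, he⟩ := hMT.resolve_left hI
    rw [sum_union hdisj]
    linarith [G.genusOf_add_genusOf_le_of_disjoint w hdisj heM he]

/-- A vertex in no tight set can be lowered. If every vertex were in a tight set, a tight set `M`
of maximal size would absorb the tight set through the far end of an edge leaving `M`. -/
lemma GenusBounded.exists_sub_single (hconn : G.Connected) (hd : G.GenusBounded w d)
    (hδ : G.genus w < ∑ v, d v) : ∃ x, G.GenusBounded w (d - Pi.single x 1) := by
  set tight := (univ : Finset (Finset V)).filter
    fun S => S.Nonempty ∧ S ≠ univ ∧ ∑ v ∈ S, d v ≤ G.genusOf w S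
  suffices ∃ x, ∀ S ∈ tight, x ∉ S by
    obtain ⟨x, hx⟩ := this
    refine ⟨x, fun S hS hS' => ?_⟩
    rw [sum_sub_pi_single]
    have := hd S hS hS'
    split_ifs with hxS
    · by_contra h
      exact hx S (mem_filter.2 ⟨mem_univ S, hS, hS', by linarith⟩) hxS
    · linarith
  by_contra! hcover
  obtain ⟨x⟩ := hconn.1
  obtain ⟨M, hM, hmax⟩ := exists_max_image tight card
    (let ⟨S, hS, _⟩ := hcover x; ⟨S, hS⟩)
  obtain ⟨-, hMne, hMuniv, hMd⟩ := mem_filter.1 hM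
  obtain ⟨e, he⟩ := hconn.exists_inCut hMne hMuniv
  obtain ⟨b, hbM, hfst, hsnd⟩ : ∃ b ∉ M, G.fst e ∈ insert b M ∧ G.snd e ∈ insert b M := by
    rcases he with ⟨h1, h2⟩ | ⟨h1, h2⟩
    · exact ⟨_, h2, mem_insert_of_mem h1, mem_insert_self _ _⟩
    · exact ⟨_, h1, mem_insert_self _ _, mem_insert_of_mem h2⟩
  obtain ⟨T, hT, hbT⟩ := hcover b
  obtain ⟨-, -, -, hTd⟩ := mem_filter.1 hT
  have hsub : insert b M ⊆ M ∪ T := insert_subset (mem_union_right _ hbT) subset_union_left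
  have hU := hd.sum_union_le hMuniv hMd hTd
    (or_iff_not_imp_left.2 fun _ => ⟨e, he, mem_filter.2 ⟨mem_univ e, hsub hfst, hsub hsnd⟩⟩)
  have hUuniv : M ∪ T ≠ univ := by
    rintro h
    rw [h] at hU
    exact absurd hU (not_le.2 hδ)
  have hcard : #M < #(M ∪ T) :=
    card_lt_card ⟨subset_union_left, fun h => hbM (h (hsub (mem_insert_self b M)))⟩
  have := hmax (M ∪ T) (mem_filter.2 ⟨mem_univ _, hMne.mono subset_union_left, hUuniv, hU⟩)
  omega

lemma GenusBounded.exists_le_sum_eq_genus (hconn : G.Connected) (hd : G.GenusBounded w d)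
    (hδ : G.genus w ≤ ∑ v, d v) : ∃ d' ≤ d, G.GenusBounded w d' ∧ ∑ v, d' v = G.genus w := by
  obtain ⟨n, hn⟩ := Int.eq_ofNat_of_zero_le (sub_nonneg.2 hδ)
  induction n generalizing d with
  | zero => exact ⟨d, le_rfl, hd, by omega⟩
  | succ n ih =>
    obtain ⟨x, hx⟩ := hd.exists_sub_single hconn (by omega)
    have hsum : ∑ v, (d - Pi.single x 1 : V → ℤ) v = ∑ v, d v - 1 := by
      rw [sum_sub_pi_single, if_pos (mem_univ x)]
    obtain ⟨d', hle, hd', hsum'⟩ := ih hx (by omega) (by omega)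
    exact ⟨d', hle.trans (sub_le_self _ (Pi.single_nonneg.2 zero_le_one)), hd', hsum'⟩

end Reduction

end Multigraph

/-- If `d` is a semistable multidegree of total degree `δ ≥ g` on a stable
weighted multigraph, then there are effective multidegrees `e`, `e'` such that `d - e`
is semistable of total degree `g` and `d - e'` is semistable of total degree `g - 1`. -/
theorem semistable_minus_effective
    (G : Multigraph V E) (w : V → ℕ) (hG : G.IsStable w) (d : V → ℤ)
    (hss : G.Semistable w d) (hδ : G.genus w ≤ ∑ v, d v) :
    ∃ e e' : V → ℤ, Multigraph.Effective e ∧ Multigraph.Effective e' ∧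
      G.Semistable w (fun v => d v - e v) ∧ (∑ v, (d v - e v)) = G.genus w ∧
      G.Semistable w (fun v => d v - e' v) ∧ (∑ v, (d v - e' v)) = G.genus w - 1 := by
  obtain ⟨d', hd'd, hd', hsum⟩ := (hss.genusBounded hG hδ).exists_le_sum_eq_genus hG.1 hδ
  obtain ⟨x⟩ := hG.1.1
  have hle : d' - Pi.single x 1 ≤ d := (sub_le_self _ (Pi.single_nonneg.2 zero_le_one)).trans hd'd
  have hsum' : ∑ v, (d' - Pi.single x 1 : V → ℤ) v = G.genus w - 1 := by
    rw [sum_sub_pi_single, if_pos (mem_univ x), hsum]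
  refine ⟨d - d', d - (d' - Pi.single x 1), fun v => sub_nonneg.2 (hd'd v),
    fun v => sub_nonneg.2 (hle v), ?_, ?_, ?_, ?_⟩ <;> simp only [Pi.sub_apply, sub_sub_cancel]
  · exact hd'.semistable hG hsum
  · exact hsum
  · exact Multigraph.semistable_of_sum_eq_genus_sub_one (by linarith [hG.2.1])
      (hd'.sub_single_genusOf_sub_one_le hsum x) hsum'
  · exact hsum'
end

section
/- Let G be a connected weighted multigraph with nonempty vertex set and let O be an orientation of G. Then the following are equivalent: (i) there exists a nonempty subset S ⊆ V such that the induced subgraph of G on S is connected, every edge of the cut of S has its head in S, and for every v ∈ S one has g_v − 1 + indeg_{O,S}(v) ≥ 0, where indeg_{O,S}(v) is the number of edges in E(S) with head v; (ii) some vertex of G has weight g_v ≥ 1, or O contains a directed cycle. -/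
open Finset

variable {V E : Type} [Fintype V] [Fintype E] [DecidableEq V] [DecidableEq E]

/-!
If all weights vanish, the inequality at `v ∈ S` says that `v` is the head of an edge of `E(S)`;
following these edges backwards inside the finite set `S` must eventually close up, giving a
directed cycle. Conversely, if `g_v ≥ 1` or `v` lies on a directed cycle, the set of vertices
reachable from `v` by directed paths works: it is closed under following edges forwards, so its
cut points into it, and every vertex of it other than `v` is entered by the last edge of a path
from `v`.
-/

open Function Relation

theorem Function.exists_mem_periodicPts_of_finite {α : Type*} [Finite α] [Nonempty α]
    (f : α → α) : ∃ y, y ∈ periodicPts f := by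
  obtain ⟨m, n, hmn, heq⟩ :=
    Finite.exists_ne_map_eq_of_infinite fun n => f^[n] (Classical.arbitrary α)
  wlog hlt : m < n generalizing m n
  · exact this n m hmn.symm heq.symm (by omega)
  refine ⟨f^[m] (Classical.arbitrary α), mk_mem_periodicPts (n := n - m) (by omega) ?_⟩
  rw [IsPeriodicPt, IsFixedPt, ← iterate_add_apply, Nat.sub_add_cancel hlt.le, heq]

theorem Function.exists_injective_cycle_of_finite {α : Type*} [Finite α] [Nonempty α]
    (f : α → α) :
    ∃ (k : ℕ) (c : Fin (k + 1) → α), Injective c ∧ ∀ i, f (c i) = c (i + 1) := by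
  obtain ⟨y, hy⟩ := exists_mem_periodicPts_of_finite f
  obtain ⟨k, hk⟩ :=
    Nat.exists_eq_add_one_of_ne_zero (minimalPeriod_pos_of_mem_periodicPts hy).ne'
  refine ⟨k, fun i => f^[i] y, fun i j hij => Fin.ext ?_, fun i => ?_⟩
  · exact iterate_injOn_Iio_minimalPeriod (by simp [hk, i.is_le]) (by simp [hk, j.is_le]) hij
  · rw [← iterate_succ_apply' f, ← iterate_mod_minimalPeriod_eq, hk]
    simp only [Fin.val_add, Fin.val_one', Nat.add_mod_mod]

namespace GraphOrientation

variable {V E : Type} {G : Multigraph V E} (O : GraphOrientation G)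

def indegOn [Fintype E] [DecidableEq V] (S : Finset V) (v : V) : ℕ :=
  #{e | O.head e = v ∧ G.fst e ∈ S ∧ G.snd e ∈ S}

theorem fst_mem_and_snd_mem_iff (S : Finset V) (e : E) :
    G.fst e ∈ S ∧ G.snd e ∈ S ↔ O.tail e ∈ S ∧ O.head e ∈ S := by
  rcases O.compat e with ⟨ht, hh⟩ | ⟨ht, hh⟩ <;> grind

theorem inCut_iff (S : Finset V) (e : E) :
    G.InCut S e ↔ O.tail e ∈ S ∧ O.head e ∉ S ∨ O.tail e ∉ S ∧ O.head e ∈ S := by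
  rcases O.compat e with ⟨ht, hh⟩ | ⟨ht, hh⟩ <;> grind [Multigraph.InCut]

theorem adjOn_tail_head {S : Finset V} {e : E} (ht : O.tail e ∈ S) (hh : O.head e ∈ S) :
    G.AdjOn S (O.tail e) (O.head e) := by
  refine ⟨e, ?_, (O.fst_mem_and_snd_mem_iff S e).2 ⟨ht, hh⟩⟩
  rcases O.compat e with ⟨ht, hh⟩ | ⟨ht, hh⟩
  · exact .inl ⟨ht.symm, hh.symm⟩
  · exact .inr ⟨hh.symm, ht.symm⟩

theorem weight_sub_one_add_indegOn_nonneg_iff [Fintype E] [DecidableEq V] (w : V → ℕ)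
    {S : Finset V} {v : V} (hv : v ∈ S) :
    0 ≤ (w v : ℤ) - 1 + O.indegOn S v ↔
      1 ≤ w v ∨ ∃ e, O.head e = v ∧ O.tail e ∈ S := by
  have hpos : 0 < O.indegOn S v ↔ ∃ e, O.head e = v ∧ O.tail e ∈ S := by
    simp only [indegOn, card_pos, Finset.Nonempty, mem_filter, mem_univ, true_and,
      O.fst_mem_and_snd_mem_iff]
    exact exists_congr fun e => ⟨fun h => ⟨h.1, h.2.1⟩, fun h => ⟨h.1, h.2, h.1 ▸ hv⟩⟩
  rw [← hpos]
  omega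

instance (S : Finset V) : Std.Symm (G.AdjOn S) :=
  ⟨fun _ _ ⟨e, hends, hS⟩ => ⟨e, hends.symm, hS⟩⟩

theorem hasDirectedCycle_of_forall_exists_head_eq (S : Finset V) (hS : S.Nonempty)
    (h : ∀ v ∈ S, ∃ e, O.head e = v ∧ O.tail e ∈ S) : O.HasDirectedCycle := by
  choose inEdge head_inEdge tail_inEdge using h
  have := hS.to_subtype
  obtain ⟨k, c, hc, hpred⟩ := exists_injective_cycle_of_finite
    fun v : S => (⟨O.tail (inEdge v v.2), tail_inEdge v v.2⟩ : S)
  -- `c` is a cycle of the predecessor map, so it runs against the edges; `i ↦ -i` reverses it.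
  refine ⟨k, fun i => c (-i), fun i => inEdge (c (-(i + 1))) (c (-(i + 1))).2,
    Subtype.val_injective.comp (hc.comp neg_injective), fun i j hij => ?_, fun i => ⟨?_, ?_⟩⟩
  · have := congrArg O.head hij
    simp only [head_inEdge] at this
    simpa using hc (Subtype.ext this)
  · have := congrArg Subtype.val (hpred (-(i + 1)))
    simp only at this
    rw [this, neg_add, neg_add_cancel_right]
  · exact head_inEdge _ _

def Step (a b : V) : Prop := ∃ e, O.tail e = a ∧ O.head e = b

open Classical in
noncomputable def reach [Fintype V] (v : V) : Finset V := {u | ReflTransGen O.Step v u}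

section reach

variable [Fintype V] {v : V}

theorem mem_reach {u : V} : u ∈ O.reach v ↔ ReflTransGen O.Step v u := by
  simp [reach]

theorem mem_reach_self (v : V) : v ∈ O.reach v :=
  O.mem_reach.2 .refl

theorem head_mem_reach {e : E} (he : O.tail e ∈ O.reach v) : O.head e ∈ O.reach v :=
  O.mem_reach.2 ((O.mem_reach.1 he).tail ⟨e, rfl, rfl⟩)

theorem cutTowards_reach (v : V) : O.CutTowards (O.reach v) := by
  intro e he
  rcases (O.inCut_iff _ e).1 he with ⟨ht, hh⟩ | ⟨-, hh⟩
  · exact absurd (O.head_mem_reach ht) hh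
  · exact hh

theorem connectedOn_reach (v : V) : G.ConnectedOn (O.reach v) := by
  have hfrom : ∀ u ∈ O.reach v, ReflTransGen (G.AdjOn (O.reach v)) v u := by
    intro u hu
    induction O.mem_reach.1 hu with
    | refl => exact .refl
    | @tail a _ hva hstep ih =>
      obtain ⟨e, rfl, rfl⟩ := hstep
      have ht : O.tail e ∈ O.reach v := O.mem_reach.2 hva
      exact (ih ht).tail (O.adjOn_tail_head ht (O.head_mem_reach ht))
  intro a ha b hb
  exact (symm (hfrom a ha)).trans (hfrom b hb)

theorem exists_head_eq_of_mem_reach {u : V} (hu : u ∈ O.reach v) (huv : u ≠ v) :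
    ∃ e, O.head e = u ∧ O.tail e ∈ O.reach v := by
  rcases (O.mem_reach.1 hu).cases_tail with rfl | ⟨a, hva, e, rfl, rfl⟩
  · exact absurd rfl huv
  · exact ⟨e, rfl, O.mem_reach.2 hva⟩

theorem weight_sub_one_add_indegOn_reach_nonneg [Fintype E] [DecidableEq V] (w : V → ℕ)
    (hv : 1 ≤ w v ∨ ∃ e, O.head e = v ∧ O.tail e ∈ O.reach v) :
    ∀ u ∈ O.reach v, 0 ≤ (w u : ℤ) - 1 + O.indegOn (O.reach v) u := by
  intro u hu
  rw [O.weight_sub_one_add_indegOn_nonneg_iff w hu]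
  obtain rfl | huv := eq_or_ne u v
  · exact hv
  · exact .inr (O.exists_head_eq_of_mem_reach hu huv)

theorem exists_head_eq_tail_mem_reach_of_hasDirectedCycle (h : O.HasDirectedCycle) :
    ∃ v e, O.head e = v ∧ O.tail e ∈ O.reach v := by
  obtain ⟨k, vs, es, -, -, hes⟩ := h
  have hreach : ∀ i, vs i ∈ O.reach (vs 0) := by
    refine Fin.induction (O.mem_reach_self _) fun i ih => ?_
    have := O.head_mem_reach (e := es i.castSucc) (by rwa [(hes _).1])
    rwa [(hes _).2, Fin.coeSucc_eq_succ] at this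
  refine ⟨vs 0, es (Fin.last k), ?_, ?_⟩
  · rw [(hes _).2, Fin.last_add_one]
  · rw [(hes _).1]
    exact hreach _

end reach

end GraphOrientation

theorem exists_good_subset_iff_weight_or_cycle_general
    (G : Multigraph V E) (w : V → ℕ) (O : GraphOrientation G) :
    (∃ S : Finset V, S.Nonempty ∧ G.ConnectedOn S ∧
      (∀ e, G.InCut S e → O.head e ∈ S) ∧
      ∀ v ∈ S, 0 ≤ (w v : ℤ) - 1 +
        ((univ.filter fun e => O.head e = v ∧ G.fst e ∈ S ∧ G.snd e ∈ S).card : ℤ)) ↔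
    ((∃ v, 1 ≤ w v) ∨ O.HasDirectedCycle) := by
  constructor
  · rintro ⟨S, hS, -, -, hdeg⟩
    by_contra! h
    refine h.2 (O.hasDirectedCycle_of_forall_exists_head_eq S hS fun v hv => ?_)
    exact ((O.weight_sub_one_add_indegOn_nonneg_iff w hv).1 (hdeg v hv)).resolve_left
      (by simpa using h.1 v)
  · intro h
    obtain ⟨v, hv⟩ : ∃ v, 1 ≤ w v ∨ ∃ e, O.head e = v ∧ O.tail e ∈ O.reach v := by
      rcases h with ⟨v, hv⟩ | hcycle
      · exact ⟨v, .inl hv⟩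
      · obtain ⟨v, e, he⟩ := O.exists_head_eq_tail_mem_reach_of_hasDirectedCycle hcycle
        exact ⟨v, .inr ⟨e, he⟩⟩
    exact ⟨O.reach v, ⟨v, O.mem_reach_self v⟩, O.connectedOn_reach v, O.cutTowards_reach v,
      O.weight_sub_one_add_indegOn_reach_nonneg w hv⟩

/-- For an orientation `O` of a connected weighted multigraph with
nonempty vertex set, the following are equivalent: (i) there is a nonempty `S ⊆ V`
with connected induced subgraph, cut directed towards `S`, and
`g_v - 1 + indeg_{O,S}(v) ≥ 0` for all `v ∈ S`; (ii) some vertex has weight at least 1,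
or `O` has a directed cycle. -/
theorem exists_good_subset_iff_weight_or_cycle
    (G : Multigraph V E) (w : V → ℕ) (hG : G.Connected) (O : GraphOrientation G) :
    (∃ S : Finset V, S.Nonempty ∧ G.ConnectedOn S ∧
      (∀ e, G.InCut S e → O.head e ∈ S) ∧
      ∀ v ∈ S, 0 ≤ (w v : ℤ) - 1 +
        ((univ.filter fun e => O.head e = v ∧ G.fst e ∈ S ∧ G.snd e ∈ S).card : ℤ)) ↔
    ((∃ v, 1 ≤ w v) ∨ O.HasDirectedCycle) :=
  exists_good_subset_iff_weight_or_cycle_general G w O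
end
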